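/- Lemma 5(b). Let G be a simple graph with signature σ and let v₀ be a vertex of G. Let 𝒲_σ be the set of all negative closed walks of (G, σ), let 𝒲_{v₀} be the set of all closed walks starting at v₀, and let 𝒲 = 𝒲_σ \ 𝒲_{v₀} (i.e., 𝒲 consists of the negative closed walks whose starting vertex is not v₀). Then 𝒲 satisfies the exclusive 3-walk property. -/

import Mathlib

open SimpleGraph

/- A walk is *negative* w.r.t. a signature `σ : Sym2 V → Bool` if the number of its
edges (with multiplicity) carrying sign `false` is odd. -/
def Walk.IsNegative {V : Type*} {G : SimpleGraph V} (σ : Sym2 V → Bool)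
    {u v : V} (W : G.Walk u v) : Prop :=
  Odd (W.edges.countP fun e => !σ e)

/- The family of negative closed walks of the signed graph `(G, σ)`. -/
def negClosedWalks {V : Type*} (G : SimpleGraph V) (σ : Sym2 V → Bool) :
    ∀ v : V, Set (G.Walk v v) :=
  fun _ => {W | Walk.IsNegative σ W}

/- `𝒲` satisfies the *exclusive 3-walk property*: for every two vertices `x, y` and
every three `x–y` walks `W₁, W₂, W₃`, an even number of the three closed walks
`W₁W₂⁻¹`, `W₁W₃⁻¹`, `W₂W₃⁻¹` belongs to `𝒲`. -/
open scoped Classical in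
def Exclusive3WalkProperty {V : Type*} {G : SimpleGraph V}
    (𝒲 : ∀ v : V, Set (G.Walk v v)) : Prop :=
  ∀ (x y : V) (W₁ W₂ W₃ : G.Walk x y),
    Even ((if W₁.append W₂.reverse ∈ 𝒲 x then 1 else 0) +
          (if W₁.append W₃.reverse ∈ 𝒲 x then 1 else 0) +
          (if W₂.append W₃.reverse ∈ 𝒲 x then 1 else 0) : ℕ)

/- `𝒲` is *closed under rotation*: for every closed walk `W ∈ 𝒲` at `v` and every
vertex `u` in the support of `W`, the rotation of `W` starting at `u` is in `𝒲`. -/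
def ClosedUnderRotation {V : Type*} [DecidableEq V] {G : SimpleGraph V}
    (𝒲 : ∀ v : V, Set (G.Walk v v)) : Prop :=
  ∀ (v : V) (W : G.Walk v v), W ∈ 𝒲 v →
    ∀ (u : V) (h : u ∈ W.support), W.rotate (u := u) h ∈ 𝒲 u

lemma countP_append_reverse {V : Type*} {G : SimpleGraph V} (σ : Sym2 V → Bool)
    {x y : V} (W W' : G.Walk x y) :
    (W.append W'.reverse).edges.countP (fun e => !σ e) =
      W.edges.countP (fun e => !σ e) + W'.edges.countP (fun e => !σ e) := by
  rw [Walk.edges_append, List.countP_append, Walk.edges_reverse, List.countP_reverse]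

/-- Lemma 5(b): the family of negative closed walks of `(G, σ)` whose starting vertex is
not `v₀` satisfies the exclusive 3-walk property. -/
theorem negClosedWalks_avoid_basepoint_exclusive3 {V : Type*} (G : SimpleGraph V)
    (σ : Sym2 V → Bool) (v₀ : V) :
    Exclusive3WalkProperty
      (fun v : V => {W : G.Walk v v | Walk.IsNegative σ W ∧ v ≠ v₀}) := by
  intro x y W₁ W₂ W₃
  by_cases hx : x = v₀
  · simp [hx]
  · simp only [Set.mem_setOf_eq, Walk.IsNegative, countP_append_reverse, and_iff_left hx]
    rcases Nat.even_or_odd (W₁.edges.countP fun e => !σ e) with h1 | h1 <;>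
    rcases Nat.even_or_odd (W₂.edges.countP fun e => !σ e) with h2 | h2 <;>
    rcases Nat.even_or_odd (W₃.edges.countP fun e => !σ e) with h3 | h3 <;>
    (simp only [Nat.odd_iff, Nat.even_iff] at h1 h2 h3 ⊢; simp [Nat.add_mod, h1, h2, h3])
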